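/- arXiv:2007.14345 — 6 statements merged into one kernel-verified Lean document; each statement's English description precedes it below -/
import Mathlib

section
/- Let (A;E) be an exact category with exact coproducts and let m^i: B → C^i, for i in a set I, be inflations with common domain B occurring in conflations B → C^i → A^i. Then the pushout m = ⨿_B m^i : B → ⨿_B C^i exists in (A;E) and is the inflation occurring in the pushout of the coproduct conflation B^{(I)} → ⨿_i C^i → ⨿_i A^i along the sum morphism s: B^{(I)} → B; that is, there is a morphism of conflations from B^{(I)} → ⨿_i C^i → ⨿_i A^i to B → ⨿_B C^i → ⨿_i A^i whose left component is s and whose right component is the identity of ⨿_i A^i, and whose left-hand square is a pushout square. -/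
open CategoryTheory CategoryTheory.Limits

universe w v u

namespace IdealApprox

/-- The data of an exact structure: a class of composable pairs
(the "conflations" `B ⟶ C ⟶ X`). -/
structure ExactStructureData (A : Type u) [Category.{v} A] [Preadditive A] :
    Type (max u v) where
  conf : ∀ ⦃B C X : A⦄, (B ⟶ C) → (C ⟶ X) → Prop

/-- An ideal of an additive category: an additive subbifunctor of `Hom`. -/
structure Ideal (A : Type u) [Category.{v} A] [Preadditive A] : Type (max u v) where
  mem : ∀ ⦃X Y : A⦄, (X ⟶ Y) → Prop
  zero_mem : ∀ X Y : A, mem (0 : X ⟶ Y)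
  add_mem : ∀ ⦃X Y : A⦄ ⦃f g : X ⟶ Y⦄, mem f → mem g → mem (f + g)
  neg_mem : ∀ ⦃X Y : A⦄ ⦃f : X ⟶ Y⦄, mem f → mem (-f)
  comp_mem : ∀ ⦃W X Y Z : A⦄ (h : W ⟶ X) ⦃g : X ⟶ Y⦄ (k : Y ⟶ Z), mem g → mem (h ≫ g ≫ k)

/-- A class of morphisms of a category. -/
abbrev MorClass (A : Type u) [Category.{v} A] : Type (max u v) :=
  ∀ ⦃X Y : A⦄, (X ⟶ Y) → Prop

variable {A : Type u} [Category.{v} A] [Preadditive A]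

/-- `(i, p)` is a kernel-cokernel pair. -/
structure IsKernelCokernelPair {B C X : A} (i : B ⟶ C) (p : C ⟶ X) : Prop where
  w : i ≫ p = 0
  isKernel : Nonempty (IsLimit (KernelFork.ofι i w))
  isCokernel : Nonempty (IsColimit (CokernelCofork.ofπ p w))

/-- The maximal candidate exact structure: all kernel-cokernel pairs.  On an abelian
category (such as a module category) this is the standard exact (abelian) structure. -/
def maxExact (A : Type u) [Category.{v} A] [Preadditive A] : ExactStructureData A :=
  ⟨fun _ _ _ i p => IsKernelCokernelPair i p⟩

/-- `m` is an inflation: it occurs as the first map of a conflation. -/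
def ExactStructureData.IsInflation (E : ExactStructureData A) {B C : A} (m : B ⟶ C) : Prop :=
  ∃ (X : A) (p : C ⟶ X), E.conf m p

/-- `p` is a deflation: it occurs as the second map of a conflation. -/
def ExactStructureData.IsDeflation (E : ExactStructureData A) {C X : A} (p : C ⟶ X) : Prop :=
  ∃ (B : A) (i : B ⟶ C), E.conf i p

/-- The axioms of a Quillen exact category `(A; E)`. -/
structure ExactStructureData.IsExact (E : ExactStructureData A) : Prop where
  ker_coker : ∀ ⦃B C X : A⦄ ⦃i : B ⟶ C⦄ ⦃p : C ⟶ X⦄, E.conf i p → IsKernelCokernelPair i p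
  iso_closed : ∀ ⦃B C X B' C' X' : A⦄ ⦃i : B ⟶ C⦄ ⦃p : C ⟶ X⦄ ⦃i' : B' ⟶ C'⦄ ⦃p' : C' ⟶ X'⦄
      (eB : B ≅ B') (eC : C ≅ C') (eX : X ≅ X'),
      i ≫ eC.hom = eB.hom ≫ i' → p ≫ eX.hom = eC.hom ≫ p' → E.conf i p → E.conf i' p'
  id_inflation : ∀ X : A, E.IsInflation (𝟙 X)
  id_deflation : ∀ X : A, E.IsDeflation (𝟙 X)
  comp_inflation : ∀ ⦃X Y Z : A⦄ ⦃f : X ⟶ Y⦄ ⦃g : Y ⟶ Z⦄,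
      E.IsInflation f → E.IsInflation g → E.IsInflation (f ≫ g)
  comp_deflation : ∀ ⦃X Y Z : A⦄ ⦃f : X ⟶ Y⦄ ⦃g : Y ⟶ Z⦄,
      E.IsDeflation f → E.IsDeflation g → E.IsDeflation (f ≫ g)
  pushout_inflation : ∀ ⦃X Y Z : A⦄ (m : X ⟶ Y) (f : X ⟶ Z), E.IsInflation m →
      ∃ (W : A) (g : Y ⟶ W) (m' : Z ⟶ W), IsPushout m f g m' ∧ E.IsInflation m'
  pullback_deflation : ∀ ⦃X Y Z : A⦄ (p : Y ⟶ X) (f : Z ⟶ X), E.IsDeflation p →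
      ∃ (W : A) (g : W ⟶ Y) (p' : W ⟶ Z), IsPullback g p' p f ∧ E.IsDeflation p'

/-- `Ext(a,b) = 0`: the composite `Ext(A1,B0) ⟶ Ext(A0,B1)` (pullback along `a`
followed by pushout along `b`) vanishes.  Elementwise: for every conflation
`B0 ⟶ C ⟶ A1` and every pushout of it along `b` (a conflation `B1 ⟶ C' ⟶ A1`),
the morphism `a` lifts along the deflation `C' ⟶ A1`, i.e. the pullback along `a`
of the pushout along `b` splits. -/
def ExtZero (E : ExactStructureData A) {A0 A1 B0 B1 : A} (a : A0 ⟶ A1) (b : B0 ⟶ B1) : Prop :=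
  ∀ ⦃C : A⦄ (i : B0 ⟶ C) (p : C ⟶ A1), E.conf i p →
    ∀ ⦃C' : A⦄ (c : C ⟶ C') (i' : B1 ⟶ C') (p' : C' ⟶ A1),
      IsPushout i b c i' → c ≫ p' = p → i' ≫ p' = 0 →
      ∃ s : A0 ⟶ C', s ≫ p' = a

/-- The class of morphisms left `Ext`-orthogonal to every member of `M`. -/
def leftPerp (E : ExactStructureData A) (M : MorClass A) : MorClass A :=
  fun _ _ a => ∀ ⦃B0 B1 : A⦄ (b : B0 ⟶ B1), M b → ExtZero E a b

/-- The class of morphisms right `Ext`-orthogonal to every member of `M`. -/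
def rightPerp (E : ExactStructureData A) (M : MorClass A) : MorClass A :=
  fun _ _ b => ∀ ⦃A0 A1 : A⦄ (a : A0 ⟶ A1), M a → ExtZero E a b

/-- Intersection of two classes of morphisms. -/
def interClass (M N : MorClass A) : MorClass A := fun _ _ f => M f ∧ N f

/-- Intersection of a set-indexed family of classes of morphisms. -/
def interFamily {ι : Type w} (J : ι → MorClass A) : MorClass A := fun _ _ f => ∀ i, J i f

/-- `j : B ⟶ C0` is a special `J`-preenvelope of `B`: it belongs to `J` and appears as the
inflation of a conflation admitting a morphism of conflations (identity on `B`) whose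
right-hand component lies in `⊥J`. -/
def IsSpecialPreenvelope (E : ExactStructureData A) (J : MorClass A) {B C0 : A}
    (j : B ⟶ C0) : Prop :=
  J j ∧ ∃ (A0 A1 C1 : A) (p0 : C0 ⟶ A0) (j' : B ⟶ C1) (p1 : C1 ⟶ A1)
      (c : C0 ⟶ C1) (a : A0 ⟶ A1),
    E.conf j p0 ∧ E.conf j' p1 ∧ j ≫ c = j' ∧ p0 ≫ a = c ≫ p1 ∧ leftPerp E J a

/-- `J` is a special preenveloping ideal (class). -/
def SpecialPreenveloping (E : ExactStructureData A) (J : MorClass A) : Prop :=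
  ∀ B : A, ∃ (C0 : A) (j : B ⟶ C0), IsSpecialPreenvelope E J j

/-- `e : D1 ⟶ B` is a special `I`-precover of `B`. -/
def IsSpecialPrecover (E : ExactStructureData A) (I : MorClass A) {D1 B : A}
    (e : D1 ⟶ B) : Prop :=
  I e ∧ ∃ (K0 K1 D0 : A) (i0 : K0 ⟶ D0) (p0 : D0 ⟶ B) (i1 : K1 ⟶ D1)
      (k : K0 ⟶ K1) (d : D0 ⟶ D1),
    E.conf i0 p0 ∧ E.conf i1 e ∧ i0 ≫ d = k ≫ i1 ∧ d ≫ e = p0 ∧ rightPerp E I k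

/-- `I` is a special precovering ideal (class). -/
def SpecialPrecovering (E : ExactStructureData A) (I : MorClass A) : Prop :=
  ∀ B : A, ∃ (D1 : A) (e : D1 ⟶ B), IsSpecialPrecover E I e

/-- The ideal of projective morphisms: morphisms left `Ext`-orthogonal to all morphisms. -/
def projClass (E : ExactStructureData A) : MorClass A :=
  fun _ _ p => ∀ ⦃B0 B1 : A⦄ (b : B0 ⟶ B1), ExtZero E p b

/-- The ideal of injective morphisms: morphisms right `Ext`-orthogonal to all morphisms. -/
def injClass (E : ExactStructureData A) : MorClass A :=
  fun _ _ j => ∀ ⦃A0 A1 : A⦄ (a : A0 ⟶ A1), ExtZero E a j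

/-- Every object is the codomain of a projective morphism. -/
def HasEnoughProjectiveMorphisms (E : ExactStructureData A) : Prop :=
  ∀ X : A, ∃ (P : A) (p : P ⟶ X), projClass E p

/-- Every object is the domain of an injective morphism. -/
def HasEnoughInjectiveMorphisms (E : ExactStructureData A) : Prop :=
  ∀ X : A, ∃ (Y : A) (j : X ⟶ Y), injClass E j

/-- `(I, J)` is an ideal cotorsion pair: `I = ⊥J` and `J = I⊥`. -/
def IsIdealCotorsionPair (E : ExactStructureData A) (I J : MorClass A) : Prop :=
  (∀ ⦃X Y : A⦄ (f : X ⟶ Y), I f ↔ leftPerp E J f) ∧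
  (∀ ⦃X Y : A⦄ (f : X ⟶ Y), J f ↔ rightPerp E I f)

/-- A complete ideal cotorsion pair: `I` is special precovering and `J` is special
preenveloping. -/
def IsCompleteIdealCotorsionPair (E : ExactStructureData A) (I J : MorClass A) : Prop :=
  IsIdealCotorsionPair E I J ∧ SpecialPrecovering E I ∧ SpecialPreenveloping E J

/-- `c = b ⋆ a` is an ME (mono-epi) extension of the arrow `a` by the arrow `b`. -/
def IsMEExtension (E : ExactStructureData A) {B0 B1 A0 A1 C0 C1 : A}
    (b : B0 ⟶ B1) (a : A0 ⟶ A1) (c : C0 ⟶ C1) : Prop :=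
  ∃ (i0 : B0 ⟶ C0) (p0 : C0 ⟶ A0) (i1 : B1 ⟶ C1) (p1 : C1 ⟶ A1)
    (Cm : A) (im : B0 ⟶ Cm) (pm : Cm ⟶ A1) (c1 : C0 ⟶ Cm) (c2 : Cm ⟶ C1),
    E.conf i0 p0 ∧ E.conf i1 p1 ∧ E.conf im pm ∧ c = c1 ≫ c2 ∧
    i0 ≫ c1 = im ∧ c1 ≫ pm = p0 ≫ a ∧ im ≫ c2 = b ≫ i1 ∧ c2 ≫ p1 = pm

/-- `I ⋄ K` : the class of all ME-extensions `i ⋆ k` with `i ∈ I`, `k ∈ K`. -/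
def diamond (E : ExactStructureData A) (I K : MorClass A) : MorClass A :=
  fun _ _ c => ∃ (B0 B1 A0 A1 : A) (b : B0 ⟶ B1) (a : A0 ⟶ A1),
    I b ∧ K a ∧ IsMEExtension E b a c

/-- `j` is a `J`-preenvelope (left approximation). -/
def IsPreenvelope (J : MorClass A) {B C : A} (j : B ⟶ C) : Prop :=
  J j ∧ ∀ ⦃C' : A⦄ (j' : B ⟶ C'), J j' → ∃ f : C ⟶ C', j ≫ f = j'

/-- `J` is a preenveloping ideal (class). -/
def Preenveloping (J : MorClass A) : Prop :=
  ∀ B : A, ∃ (C : A) (j : B ⟶ C), IsPreenvelope J j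

/-- `e` is an `I`-precover (right approximation). -/
def IsPrecover (I : MorClass A) {D B : A} (e : D ⟶ B) : Prop :=
  I e ∧ ∀ ⦃D' : A⦄ (e' : D' ⟶ B), I e' → ∃ f : D' ⟶ D, f ≫ e = e'

/-- `I` is a precovering ideal (class). -/
def Precovering (I : MorClass A) : Prop :=
  ∀ B : A, ∃ (D : A) (e : D ⟶ B), IsPrecover I e

/-- `J` is monic preenveloping: every object admits a preenvelope which is an inflation. -/
def MonicPreenveloping (E : ExactStructureData A) (J : MorClass A) : Prop :=
  ∀ B : A, ∃ (C : A) (j : B ⟶ C), E.IsInflation j ∧ IsPreenvelope J j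

/-- `I` is epic precovering: every object admits a precover which is a deflation. -/
def EpicPrecovering (E : ExactStructureData A) (I : MorClass A) : Prop :=
  ∀ B : A, ∃ (D : A) (e : D ⟶ B), E.IsDeflation e ∧ IsPrecover I e

/-- A conflation of arrows `b ⟶ c ⟶ a` in `(Arr(A); Arr(E))`, encoded componentwise:
two conflations `(i0, p0)`, `(i1, p1)` together with the commutativity of the two squares. -/
def IsArrowConf (E : ExactStructureData A) {B0 B1 C0 C1 A0 A1 : A}
    (b : B0 ⟶ B1) (c : C0 ⟶ C1) (a : A0 ⟶ A1)
    (i0 : B0 ⟶ C0) (p0 : C0 ⟶ A0) (i1 : B1 ⟶ C1) (p1 : C1 ⟶ A1) : Prop :=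
  E.conf i0 p0 ∧ E.conf i1 p1 ∧ i0 ≫ c = b ≫ i1 ∧ p0 ≫ a = c ≫ p1

/-- An ME (mono-epi) conflation of arrows, encoded componentwise. -/
def IsMEArrowConf (E : ExactStructureData A) {B0 B1 C0 C1 A0 A1 : A}
    (b : B0 ⟶ B1) (c : C0 ⟶ C1) (a : A0 ⟶ A1)
    (i0 : B0 ⟶ C0) (p0 : C0 ⟶ A0) (i1 : B1 ⟶ C1) (p1 : C1 ⟶ A1) : Prop :=
  IsArrowConf E b c a i0 p0 i1 p1 ∧
  ∃ (Cm : A) (im : B0 ⟶ Cm) (pm : Cm ⟶ A1) (c1 : C0 ⟶ Cm) (c2 : Cm ⟶ C1),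
    E.conf im pm ∧ c = c1 ≫ c2 ∧ i0 ≫ c1 = im ∧ c1 ≫ pm = p0 ≫ a ∧
    im ≫ c2 = b ≫ i1 ∧ c2 ≫ p1 = pm

/-- Equivalence (isomorphism fixing the two end arrows) of conflations of arrows. -/
def ArrowConfEquiv {B0 B1 C0 C1 D0 D1 A0 A1 : A}
    (c : C0 ⟶ C1) (i0 : B0 ⟶ C0) (p0 : C0 ⟶ A0) (i1 : B1 ⟶ C1) (p1 : C1 ⟶ A1)
    (d : D0 ⟶ D1) (j0 : B0 ⟶ D0) (q0 : D0 ⟶ A0) (j1 : B1 ⟶ D1) (q1 : D1 ⟶ A1) : Prop :=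
  ∃ (e0 : C0 ≅ D0) (e1 : C1 ≅ D1),
    c ≫ e1.hom = e0.hom ≫ d ∧ i0 ≫ e0.hom = j0 ∧ e0.hom ≫ q0 = p0 ∧
    i1 ≫ e1.hom = j1 ∧ e1.hom ≫ q1 = p1

/-- `(A; E)` has exact coproducts: coproducts exist and a coproduct of conflations is a
conflation. -/
def HasExactCoproducts [HasCoproducts.{w} A] (E : ExactStructureData A) : Prop :=
  ∀ (ι : Type w) (B C X : ι → A) (i : ∀ j, B j ⟶ C j) (p : ∀ j, C j ⟶ X j),
    (∀ j, E.conf (i j) (p j)) → E.conf (Limits.Sigma.map i) (Limits.Sigma.map p)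

/-- `(A; E)` has exact products: products exist and a product of conflations is a
conflation. -/
def HasExactProducts [HasProducts.{w} A] (E : ExactStructureData A) : Prop :=
  ∀ (ι : Type w) (B C X : ι → A) (i : ∀ j, B j ⟶ C j) (p : ∀ j, C j ⟶ X j),
    (∀ j, E.conf (i j) (p j)) → E.conf (Limits.Pi.map i) (Limits.Pi.map p)

/-- The ideal generated by a set-indexed family of morphisms: finite sums of
composites through the generators. -/
def genIdeal {ι : Type w} {X0 X1 : ι → A} (m : ∀ i, X0 i ⟶ X1 i) : MorClass A :=
  fun X Y f => ∃ (n : ℕ) (j : Fin n → ι) (g : ∀ k : Fin n, X ⟶ X0 (j k))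
    (h : ∀ k : Fin n, X1 (j k) ⟶ Y),
    f = ∑ k : Fin n, g k ≫ m (j k) ≫ h k

/-- The sum of a set-indexed family of ideals: finite sums of members. -/
def idealFamilySum {ι : Type w} (I : ι → Ideal A) : MorClass A :=
  fun X Y f => ∃ (n : ℕ) (j : Fin n → ι) (g : Fin n → (X ⟶ Y)),
    (∀ k, (I (j k)).mem (g k)) ∧ f = ∑ k : Fin n, g k

/-- Containment of ideals. -/
def Ideal.le (I J : Ideal A) : Prop := ∀ ⦃X Y : A⦄ ⦃f : X ⟶ Y⦄, I.mem f → J.mem f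

/-- Intersection of two ideals. -/
def Ideal.inf (I J : Ideal A) : Ideal A where
  mem := fun _ _ f => I.mem f ∧ J.mem f
  zero_mem := fun X Y => ⟨I.zero_mem X Y, J.zero_mem X Y⟩
  add_mem := fun _ _ _ _ hf hg => ⟨I.add_mem hf.1 hg.1, J.add_mem hf.2 hg.2⟩
  neg_mem := fun _ _ _ hf => ⟨I.neg_mem hf.1, J.neg_mem hf.2⟩
  comp_mem := fun _ _ _ _ h _ k hg => ⟨I.comp_mem h k hg.1, J.comp_mem h k hg.2⟩

/-- Sum of two ideals. -/
def Ideal.sum (I J : Ideal A) : Ideal A where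
  mem := fun _ _ f => ∃ g h, I.mem g ∧ J.mem h ∧ f = g + h
  zero_mem := fun X Y => ⟨0, 0, I.zero_mem X Y, J.zero_mem X Y, by simp⟩
  add_mem := by
    rintro X Y f g ⟨f1, f2, hf1, hf2, rfl⟩ ⟨g1, g2, hg1, hg2, rfl⟩
    exact ⟨f1 + g1, f2 + g2, I.add_mem hf1 hg1, J.add_mem hf2 hg2, by abel⟩
  neg_mem := by
    rintro X Y f ⟨f1, f2, h1, h2, rfl⟩
    exact ⟨-f1, -f2, I.neg_mem h1, J.neg_mem h2, by abel⟩
  comp_mem := by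
    rintro W X Y Z h g k ⟨g1, g2, h1, h2, rfl⟩
    exact ⟨h ≫ g1 ≫ k, h ≫ g2 ≫ k, I.comp_mem h k h1, J.comp_mem h k h2, by
      simp [Preadditive.add_comp, Preadditive.comp_add]⟩

/-- An ideal closed under set-indexed coproducts of morphisms. -/
def ClosedUnderCoproducts [HasCoproducts.{w} A] (I : Ideal A) : Prop :=
  ∀ ⦃ι : Type w⦄ ⦃X0 X1 : ι → A⦄ (f : ∀ i, X0 i ⟶ X1 i),
    (∀ i, I.mem (f i)) → I.mem (Limits.Sigma.map f)

/-- An ideal closed under ME-extensions by projective morphisms. -/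
def ClosedUnderProjME (E : ExactStructureData A) (I : Ideal A) : Prop :=
  ∀ ⦃P0 P1 K0 K1 C0 C1 : A⦄ (p : P0 ⟶ P1) (k : K0 ⟶ K1) (c : C0 ⟶ C1),
    projClass E p → I.mem k → IsMEExtension E p k c → I.mem c

/-- `Ext_{Arr(A)}(a, b)` is a set: there is a set-indexed family of conflations of arrows
`b ⟶ c^ζ ⟶ a` representing every conflation of arrows from `b` to `a` up to equivalence. -/
def ExtArrowSmall (E : ExactStructureData A) {A0 A1 B0 B1 : A}
    (a : A0 ⟶ A1) (b : B0 ⟶ B1) : Prop :=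
  ∃ (ι : Type w) (C0 C1 : ι → A) (c : ∀ z, C0 z ⟶ C1 z)
    (i0 : ∀ z, B0 ⟶ C0 z) (p0 : ∀ z, C0 z ⟶ A0) (i1 : ∀ z, B1 ⟶ C1 z) (p1 : ∀ z, C1 z ⟶ A1),
    (∀ z, IsArrowConf E b (c z) a (i0 z) (p0 z) (i1 z) (p1 z)) ∧
    ∀ ⦃D0 D1 : A⦄ (d : D0 ⟶ D1) (j0 : B0 ⟶ D0) (q0 : D0 ⟶ A0) (j1 : B1 ⟶ D1) (q1 : D1 ⟶ A1),
      IsArrowConf E b d a j0 q0 j1 q1 →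
      ∃ z, ArrowConfEquiv (c z) (i0 z) (p0 z) (i1 z) (p1 z) d j0 q0 j1 q1

/-- `Ext(X, B)` is a set: there is a set-indexed family of conflations `B ⟶ C^z ⟶ X`
representing every conflation from `B` to `X` up to equivalence. -/
def ExtObjSmall (E : ExactStructureData A) (X B : A) : Prop :=
  ∃ (ι : Type w) (C : ι → A) (m : ∀ z, B ⟶ C z) (p : ∀ z, C z ⟶ X),
    (∀ z, E.conf (m z) (p z)) ∧
    ∀ ⦃D : A⦄ (m' : B ⟶ D) (p' : D ⟶ X), E.conf m' p' →
      ∃ z, ∃ e : C z ≅ D, m z ≫ e.hom = m' ∧ e.hom ≫ p' = p z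

/-- `Add X`: direct summands of coproducts of copies of `X`. -/
def AddClosure [HasCoproducts.{w} A] (X : A) : A → Prop := fun M =>
  ∃ (ι : Type w) (s : M ⟶ ∐ (fun _ : ι => X)) (r : (∐ fun _ : ι => X) ⟶ M), s ≫ r = 𝟙 M

/-- The object ideal of morphisms factoring through an object of `S`. -/
def objIdeal (S : A → Prop) : MorClass A := fun X Y f =>
  ∃ (M : A) (g : X ⟶ M) (h : M ⟶ Y), S M ∧ f = g ≫ h


variable [HasCoproducts.{w} A]

/-- Lemma: infinite pushouts.  In an exact category with exact
coproducts, given a set of inflations `m i : B ⟶ C i` occurring in conflations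
`B ⟶ C i ⟶ X i`, the pushout `⨿_B m i : B ⟶ ⨿_B C i` exists and is the inflation
occurring in the pushout of the coproduct conflation `B^{(ι)} ⟶ ∐ C ⟶ ∐ X` along
the sum morphism `s : B^{(ι)} ⟶ B`. -/
theorem statement7 (E : ExactStructureData A) (hE : E.IsExact)
    (hco : HasExactCoproducts.{w} E)
    {ι : Type w} {B : A} {C X : ι → A} (m : ∀ i, B ⟶ C i) (p : ∀ i, C i ⟶ X i)
    (hconf : ∀ i, E.conf (m i) (p i)) :
    E.conf (Limits.Sigma.map m) (Limits.Sigma.map p) ∧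
    ∃ (P : A) (mP : B ⟶ P) (h : (∐ C) ⟶ P) (r : P ⟶ ∐ X),
      IsPushout (Limits.Sigma.map m) (Limits.Sigma.desc fun _ => 𝟙 B) h mP ∧
      E.conf mP r ∧ h ≫ r = Limits.Sigma.map p := by
  have hconfSig : E.conf (Limits.Sigma.map m) (Limits.Sigma.map p) :=
    hco ι (fun _ => B) C X m p hconf
  refine ⟨hconfSig, ?_⟩
  set s : (∐ fun _ : ι => B) ⟶ B := Limits.Sigma.desc fun _ => 𝟙 B with hs
  obtain ⟨W, g, m', hpo, X', p'', hconf'⟩ :=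
    hE.pushout_inflation (Limits.Sigma.map m) s ⟨_, _, hconfSig⟩
  have hw0 : Limits.Sigma.map m ≫ Limits.Sigma.map p = s ≫ (0 : B ⟶ ∐ X) := by
    ext i
    simp
    rw [← Category.assoc, (hE.ker_coker (hconf i)).w, Limits.zero_comp]
  set r : W ⟶ ∐ X := hpo.desc (Limits.Sigma.map p) 0 hw0 with hr
  have hgr : g ≫ r = Limits.Sigma.map p := hpo.inl_desc _ _ _
  have hmr : m' ≫ r = 0 := hpo.inr_desc _ _ _
  -- `Sigma.map p` is a cokernel of `Sigma.map m`
  obtain ⟨hcoker⟩ := (hE.ker_coker hconfSig).isCokernel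
  have hepi : Epi (Limits.Sigma.map p) := by
    constructor
    intro T u v huv
    exact Cofork.IsColimit.hom_ext hcoker (by simpa using huv)
  have hzero : ∀ {T : A} (t : W ⟶ T), m' ≫ t = 0 → Limits.Sigma.map m ≫ g ≫ t = 0 := by
    intro T t ht
    rw [← Category.assoc, hpo.w, Category.assoc, ht, Limits.comp_zero]
  haveI hepiR : Epi r := by
    constructor
    intro T u v huv
    refine (cancel_epi (Limits.Sigma.map p)).1 ?_
    rw [← hgr, Category.assoc, Category.assoc, huv]
  -- `r` is a cokernel of `m'`
  have hcR : IsColimit (CokernelCofork.ofπ r hmr) := by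
    refine CokernelCofork.IsColimit.ofπ' r hmr (fun {T} t ht =>
      ⟨hcoker.desc (CokernelCofork.ofπ (g ≫ t) (hzero t ht)), ?_⟩)
    have hfac : Limits.Sigma.map p ≫
        hcoker.desc (CokernelCofork.ofπ (g ≫ t) (hzero t ht)) = g ≫ t := by
      have := Cofork.IsColimit.π_desc (t := CokernelCofork.ofπ (g ≫ t) (hzero t ht)) hcoker
      simpa using this
    apply hpo.hom_ext
    · rw [← Category.assoc, hgr, hfac]
    · rw [← Category.assoc, hmr, Limits.zero_comp, ht]
  -- `p''` is also a cokernel of `m'`; transport the conflation along the induced iso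
  obtain ⟨hcP⟩ := (hE.ker_coker hconf').isCokernel
  set e : X' ≅ ∐ X := hcP.coconePointUniqueUpToIso hcR with he
  have hcomm : p'' ≫ e.hom = r := by
    have := hcP.comp_coconePointUniqueUpToIso_hom hcR WalkingParallelPair.one
    simpa using this
  have hconfR : E.conf m' r :=
    hE.iso_closed (Iso.refl B) (Iso.refl W) e (by simp) (by simp [hcomm]) hconf'
  exact ⟨W, m', g, r, hpo, hconfR, hgr⟩

end IdealApprox
end

section
/- Let (A;E) be an exact category with exact coproducts, let A^i, i ∈ I, be a set of objects of A, and let B be an object of A. Then the canonical homomorphism of abelian groups Ext(⨿_i A^i, B) → ∏_i Ext(A^i, B), which sends a conflation ξ to the family of its pullbacks along the structural morphisms a^i: A^i → ⨿_i A^i, is an isomorphism. -/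
/-! Push out the coproduct conflation `∐ B ⟶ ∐ Cᵢ ⟶ ∐ Xᵢ` along the codiagonal `∐ B ⟶ B`: the
result is a conflation `B ⟶ C ⟶ ∐ Xᵢ` whose pullbacks along the coprojections are the given
conflations. Conversely, a conflation over `∐ Xᵢ` whose pullbacks are the `B ⟶ Cᵢ ⟶ Xᵢ` receives a
morphism of conflations from this pushout, identical on both ends, hence an isomorphism by the
short five lemma; so any two such conflations are equivalent. -/

open CategoryTheory CategoryTheory.Limits

universe w v u

namespace IdealApprox

variable {A : Type u} [Category.{v} A] [Preadditive A]

namespace IsKernelCokernelPair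

variable {B C X : A} {i : B ⟶ C} {p : C ⟶ X}

lemma mono (h : IsKernelCokernelPair i p) : Mono i :=
  mono_of_isLimit_fork h.isKernel.some

lemma epi (h : IsKernelCokernelPair i p) : Epi p :=
  epi_of_isColimit_cofork h.isCokernel.some

lemma exists_lift (h : IsKernelCokernelPair i p) {T : A} (f : T ⟶ C) (hf : f ≫ p = 0) :
    ∃ l : T ⟶ B, l ≫ i = f :=
  ⟨_, (KernelFork.IsLimit.lift' h.isKernel.some f hf).2⟩

lemma exists_desc (h : IsKernelCokernelPair i p) {T : A} (f : C ⟶ T) (hf : i ≫ f = 0) :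
    ∃ d : X ⟶ T, p ≫ d = f :=
  ⟨_, (CokernelCofork.IsColimit.desc' h.isCokernel.some f hf).2⟩

end IsKernelCokernelPair

namespace ExactStructureData.IsExact

variable {E : ExactStructureData A}

lemma exists_conf_pushout (hE : E.IsExact) {B C X B' : A} {i : B ⟶ C} {p : C ⟶ X}
    (h : E.conf i p) (b : B ⟶ B') :
    ∃ (W : A) (c : C ⟶ W) (i' : B' ⟶ W) (q : W ⟶ X),
      IsPushout i b c i' ∧ E.conf i' q ∧ c ≫ q = p := by
  obtain ⟨W, c, i', hpo, X₀, p₀, h₀⟩ := hE.pushout_inflation i b ⟨X, p, h⟩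
  have hk := hE.ker_coker h
  have hk₀ := hE.ker_coker h₀
  have := hk.epi
  have := hk₀.epi
  let q : W ⟶ X := hpo.desc p 0 (by simp [hk.w])
  obtain ⟨a, ha⟩ := hk₀.exists_desc q (hpo.inr_desc _ _ _)
  obtain ⟨a', ha'⟩ := hk.exists_desc (c ≫ p₀) (by simp [reassoc_of% hpo.w, hk₀.w])
  have hqa' : q ≫ a' = p₀ := hpo.hom_ext (by simp [q, ha']) (by simp [q, hk₀.w])
  let e : X₀ ≅ X :=
    ⟨a, a', by rw [← cancel_epi p₀, reassoc_of% ha, hqa', Category.comp_id],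
      by rw [← cancel_epi p, reassoc_of% ha', ha, Category.comp_id, hpo.inl_desc]⟩
  exact ⟨W, c, i', q, hpo,
    hE.iso_closed (Iso.refl B') (Iso.refl W) e (by simp) (by simpa using ha) h₀,
    hpo.inl_desc _ _ _⟩

lemma isIso_of_conf_hom (hE : E.IsExact) {B C C' X : A} {i : B ⟶ C} {p : C ⟶ X}
    {i' : B ⟶ C'} {p' : C' ⟶ X} (h : E.conf i p) (h' : E.conf i' p') {u : C ⟶ C'}
    (hi : i ≫ u = i') (hp : u ≫ p' = p) :
    IsIso u := by
  have hk := hE.ker_coker h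
  have hk' := hE.ker_coker h'
  have := hk'.mono
  obtain ⟨W, pt, g, hpb, K, k, hkg⟩ := hE.pullback_deflation p p' ⟨B, i, h⟩
  have hkg' := hE.ker_coker hkg
  have := hkg'.epi
  -- `W = C ×_X C'` splits as `C ⊕ B` with inclusions `r`, `j` and projection `π` onto `B`;
  -- then `pt + π ≫ i` kills the kernel of the deflation `g` and descends to the inverse of `u`.
  let r : C ⟶ W := hpb.lift (𝟙 C) u (by simp [hp])
  let j : B ⟶ W := hpb.lift i 0 (by simp [hk.w])
  obtain ⟨π, hπ⟩ := hk'.exists_lift (g - pt ≫ u) (by simp [hpb.w, hp])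
  have hrπ : r ≫ π = 0 := by rw [← cancel_mono i', Category.assoc, hπ]; simp [r]
  have hjπ : j ≫ π = -𝟙 B := by rw [← cancel_mono i', Category.assoc, hπ]; simp [j, hi]
  obtain ⟨s, hs⟩ := hk.exists_lift (k ≫ pt) (by simp [hpb.w, reassoc_of% hkg'.w])
  have hkj : k = s ≫ j := hpb.hom_ext (by simp [j, hs]) (by simp [j, hkg'.w])
  obtain ⟨v, hv⟩ := hkg'.exists_desc (pt + π ≫ i) (by simp [hkj, j, reassoc_of% hjπ])
  refine ⟨v, ?_, ?_⟩
  · have hrg : r ≫ g = u := hpb.lift_snd _ _ _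
    rw [← hrg, Category.assoc, hv]
    simp [r, reassoc_of% hrπ]
  · rw [← cancel_epi g, reassoc_of% hv]
    simp [hi, hπ]

lemma exists_iso_of_isPushout (hE : E.IsExact) {B C B' W X Cx : A} {i : B ⟶ C} {b : B ⟶ B'}
    {c : C ⟶ W} {i' : B' ⟶ W} {q : W ⟶ X} (hpo : IsPushout i b c i') (hq : E.conf i' q)
    {mx : B' ⟶ Cx} {px : Cx ⟶ X} (hx : E.conf mx px) (f : C ⟶ Cx) (hf : i ≫ f = b ≫ mx)
    (hfp : f ≫ px = c ≫ q) :
    ∃ e : W ≅ Cx, i' ≫ e.hom = mx ∧ e.hom ≫ px = q := by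
  have hup : hpo.desc f mx hf ≫ px = q :=
    hpo.hom_ext (by simp [hfp]) (by simp [(hE.ker_coker hx).w, (hE.ker_coker hq).w])
  have := hE.isIso_of_conf_hom hq hx (hpo.inr_desc _ _ _) hup
  exact ⟨asIso (hpo.desc f mx hf), hpo.inr_desc _ _ _, hup⟩

end ExactStructureData.IsExact

variable [HasCoproducts.{w} A]

/-- Stated on representatives: (surjectivity) every family of conflations `B ⟶ Ci i ⟶ X i`
arises, via pullback along the `Sigma.ι X i`, from a single conflation `B ⟶ C ⟶ ∐ X`;
(injectivity) two conflations `B ⟶ C ⟶ ∐ X` having equivalent pullbacks along every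
`Sigma.ι X i` are equivalent. -/
theorem statement8 (E : ExactStructureData A) (hE : E.IsExact)
    (hco : HasExactCoproducts.{w} E) {ι : Type w} (X : ι → A) (B : A) :
    (∀ (Ci : ι → A) (mi : ∀ i, B ⟶ Ci i) (pi : ∀ i, Ci i ⟶ X i),
        (∀ i, E.conf (mi i) (pi i)) →
        ∃ (C : A) (m : B ⟶ C) (p : C ⟶ ∐ X), E.conf m p ∧
          ∀ i, ∃ d : Ci i ⟶ C, mi i ≫ d = m ∧ d ≫ p = pi i ≫ Limits.Sigma.ι X i) ∧
    (∀ (C C' : A) (m : B ⟶ C) (p : C ⟶ ∐ X) (m' : B ⟶ C') (p' : C' ⟶ ∐ X),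
        E.conf m p → E.conf m' p' →
        (∀ i, ∃ (Ci : A) (mi : B ⟶ Ci) (pi : Ci ⟶ X i) (d : Ci ⟶ C) (d' : Ci ⟶ C'),
            E.conf mi pi ∧
            mi ≫ d = m ∧ d ≫ p = pi ≫ Limits.Sigma.ι X i ∧
            mi ≫ d' = m' ∧ d' ≫ p' = pi ≫ Limits.Sigma.ι X i) →
        ∃ e : C ≅ C', m ≫ e.hom = m' ∧ e.hom ≫ p' = p) := by
  have pushout_codiagonal (Ci : ι → A) (mi : ∀ i, B ⟶ Ci i) (pi : ∀ i, Ci i ⟶ X i)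
      (h : ∀ i, E.conf (mi i) (pi i)) :=
    hE.exists_conf_pushout (hco ι (fun _ => B) Ci X mi pi h) (Sigma.desc fun _ => 𝟙 B)
  refine ⟨fun Ci mi pi hconf => ?_, fun C C' m p m' p' hc hc' hcomp => ?_⟩
  · obtain ⟨C, c, m, p, hpo, hconf, hcp⟩ := pushout_codiagonal Ci mi pi hconf
    refine ⟨C, m, p, hconf, fun i => ⟨Sigma.ι Ci i ≫ c, ?_, ?_⟩⟩
    · simpa using Sigma.ι (fun _ => B) i ≫= hpo.w
    · simp [hcp]
  · choose Ci mi pi d d' hconf hmd hdp hmd' hdp' using hcomp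
    obtain ⟨C₀, c, m₀, q₀, hpo, hconf₀, hcq⟩ := pushout_codiagonal Ci mi pi hconf
    have comparison {Cx : A} {mx : B ⟶ Cx} {px : Cx ⟶ ∐ X} (dx : ∀ i, Ci i ⟶ Cx)
        (hx : E.conf mx px) (hm : ∀ i, mi i ≫ dx i = mx)
        (hp : ∀ i, dx i ≫ px = pi i ≫ Sigma.ι X i) :
        ∃ e : C₀ ≅ Cx, m₀ ≫ e.hom = mx ∧ e.hom ≫ px = q₀ :=
      hE.exists_iso_of_isPushout hpo hconf₀ hx (Sigma.desc dx) (by ext; simp [hm])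
        (by ext; simp [hcq, hp])
    obtain ⟨e, he, he'⟩ := comparison d hc hmd hdp
    obtain ⟨f, hf, hf'⟩ := comparison d' hc' hmd' hdp'
    exact ⟨e.symm ≪≫ f, by simp [← he, hf], by simp [hf', ← he']⟩

end IdealApprox
end

section
/- Let (A;E) be an exact category with exact coproducts. Then the coproduct in (Arr(A); Arr(E)) of any set of ME-conflations of arrows is again an ME-conflation; consequently the ME-exact category of arrows (Arr(A); ME) has exact coproducts. -/
open CategoryTheory CategoryTheory.Limits

universe w v u

namespace IdealApprox

variable {A : Type u} [Category.{v} A] [Preadditive A]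

variable [HasCoproducts.{w} A]

/-- Proposition: coproducts of ME-conflations.  In an exact category
with exact coproducts, the coproduct of a set of ME-conflations of arrows is again an
ME-conflation; consequently the ME-exact category of arrows has exact coproducts. -/
theorem statement9 (E : ExactStructureData A) (hE : E.IsExact)
    (hco : HasExactCoproducts.{w} E)
    {ι : Type w} {B0 B1 C0 C1 A0 A1 : ι → A}
    (b : ∀ i, B0 i ⟶ B1 i) (c : ∀ i, C0 i ⟶ C1 i) (a : ∀ i, A0 i ⟶ A1 i)
    (i0 : ∀ i, B0 i ⟶ C0 i) (p0 : ∀ i, C0 i ⟶ A0 i)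
    (i1 : ∀ i, B1 i ⟶ C1 i) (p1 : ∀ i, C1 i ⟶ A1 i)
    (hME : ∀ i, IsMEArrowConf E (b i) (c i) (a i) (i0 i) (p0 i) (i1 i) (p1 i)) :
    IsMEArrowConf E (Limits.Sigma.map b) (Limits.Sigma.map c) (Limits.Sigma.map a)
      (Limits.Sigma.map i0) (Limits.Sigma.map p0)
      (Limits.Sigma.map i1) (Limits.Sigma.map p1) := by
  choose Cm im pm c1 c2 hconfm hfac hic hcp hic2 hcp2 using fun i => (hME i).2
  constructor
  · refine ⟨hco _ _ _ _ _ _ (fun i => (hME i).1.1), hco _ _ _ _ _ _ (fun i => (hME i).1.2.1),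
      ?_, ?_⟩
    · ext i
      simp [reassoc_of% (hME i).1.2.2.1]
    · ext i
      simp [reassoc_of% (hME i).1.2.2.2]
  · refine ⟨∐ Cm, Limits.Sigma.map im, Limits.Sigma.map pm, Limits.Sigma.map c1,
      Limits.Sigma.map c2, hco _ _ _ _ _ _ hconfm, ?_, ?_, ?_, ?_, ?_⟩ <;>
    · ext i
      simp [hfac i, reassoc_of% (hic i), reassoc_of% (hcp i), reassoc_of% (hic2 i),
        reassoc_of% (hcp2 i)]

end IdealApprox
end

section
/- Let (A;E) be an exact category with exact coproducts and let I = ⊥M be a left closed ideal of (A;E). Then I is closed under set-indexed coproducts of morphisms: if a^j ∈ I for all j in a set J and the coproduct morphism ⨿_j a^j exists, then ⨿_j a^j ∈ I. In particular, if Ext(a^j, b) = 0 for all j ∈ J, then Ext(⨿_j a^j, b) = 0. -/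
open CategoryTheory CategoryTheory.Limits

universe w v u

namespace IdealApprox

variable {A : Type u} [Category.{v} A] [Preadditive A]

variable [HasCoproducts.{w} A]

/-- Lemma: left closed ideals are closed under coproducts.  In an
exact category with exact coproducts, a left closed ideal `⊥M` is closed under
set-indexed coproducts of morphisms; in particular, if `Ext(a j, b) = 0` for all `j`,
then `Ext(∐ a j, b) = 0`. -/
theorem statement10 (E : ExactStructureData A) (hE : E.IsExact)
    (hco : HasExactCoproducts.{w} E) (M : MorClass A)
    {ι : Type w} {A0 A1 : ι → A} (a : ∀ j, A0 j ⟶ A1 j) :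
    ((∀ j, leftPerp E M (a j)) → leftPerp E M (Limits.Sigma.map a)) ∧
    (∀ ⦃B0 B1 : A⦄ (b : B0 ⟶ B1),
        (∀ j, ExtZero E (a j) b) → ExtZero E (Limits.Sigma.map a) b) := by
  have key : ∀ ⦃B0 B1 : A⦄ (b : B0 ⟶ B1),
      (∀ j, ExtZero E (a j) b) → ExtZero E (Limits.Sigma.map a) b := by
    intro B0 B1 b h C i p hip C' c i' p' hpo hcp hip'
    have hw : i ≫ p = 0 := (hE.ker_coker hip).w
    obtain ⟨hlimI⟩ := (hE.ker_coker hip).isKernel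
    have himono : Mono i := mono_of_isLimit_fork hlimI
    have hs : ∀ j : ι, ∃ sj : A0 j ⟶ C', sj ≫ p' = a j ≫ Sigma.ι A1 j := by
      intro j
      obtain ⟨W, g, q, hpb, hqdef⟩ := hE.pullback_deflation p (Sigma.ι A1 j) ⟨B0, i, hip⟩
      obtain ⟨K, k, hkq⟩ := hqdef
      obtain ⟨hlimK⟩ := (hE.ker_coker hkq).isKernel
      have hwk : k ≫ q = 0 := (hE.ker_coker hkq).w
      have hkmono : Mono k := mono_of_isLimit_fork hlimK
      have h0 : i ≫ p = (0 : B0 ⟶ A1 j) ≫ Sigma.ι A1 j := by simp [hw]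
      set ij : B0 ⟶ W := hpb.lift i 0 h0 with hij_def
      have hijg : ij ≫ g = i := hpb.lift_fst ..
      have hijq : ij ≫ q = 0 := hpb.lift_snd ..
      -- e : B0 ⟶ K with e ≫ k = ij
      obtain ⟨e, he⟩ := KernelFork.IsLimit.lift' hlimK ij hijq
      have he : e ≫ k = ij := he
      -- u : K ⟶ B0 with u ≫ i = k ≫ g
      have hkg : (k ≫ g) ≫ p = 0 := by
        rw [Category.assoc, hpb.w, ← Category.assoc, hwk, zero_comp]
      obtain ⟨u, hu⟩ := KernelFork.IsLimit.lift' hlimI (k ≫ g) hkg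
      have hu : u ≫ i = k ≫ g := hu
      have huij : u ≫ ij = k := by
        apply hpb.hom_ext
        · rw [Category.assoc, hijg, hu]
        · rw [Category.assoc, hijq, comp_zero, hwk]
      -- E.conf ij q by iso_closed
      have hconf : E.conf ij q := by
        have hue : u ≫ e = 𝟙 K := by
          rw [← cancel_mono k, Category.assoc, he, huij, Category.id_comp]
        have heu : e ≫ u = 𝟙 B0 := by
          rw [← cancel_mono i, Category.assoc, hu, ← Category.assoc, he, hijg,
            Category.id_comp]
        exact hE.iso_closed (⟨u, e, hue, heu⟩ : K ≅ B0) (Iso.refl W) (Iso.refl (A1 j))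
          (by simpa using huij.symm) (by simp) hkq
      -- pushout of ij along b
      obtain ⟨W', cj, i'', hpo', _⟩ := hE.pushout_inflation ij b ⟨A1 j, q, hconf⟩
      have hcomm : ij ≫ q = b ≫ (0 : B1 ⟶ A1 j) := by simp [hijq]
      set p'' : W' ⟶ A1 j := hpo'.desc q 0 hcomm with hp''_def
      have h1 : cj ≫ p'' = q := hpo'.inl_desc ..
      have h2 : i'' ≫ p'' = 0 := hpo'.inr_desc ..
      obtain ⟨sj', hsj'⟩ := h j ij q hconf cj i'' p'' hpo' h1 h2
      -- f : W' ⟶ C'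
      have hcomm2 : ij ≫ (g ≫ c) = b ≫ i' := by
        rw [← Category.assoc, hijg, hpo.w]
      set f : W' ⟶ C' := hpo'.desc (g ≫ c) i' hcomm2 with hf_def
      have hf1 : cj ≫ f = g ≫ c := hpo'.inl_desc ..
      have hf2 : i'' ≫ f = i' := hpo'.inr_desc ..
      have hfp : f ≫ p' = p'' ≫ Sigma.ι A1 j := by
        apply hpo'.hom_ext
        · rw [← Category.assoc, hf1, Category.assoc, hcp, hpb.w, ← Category.assoc, h1]
        · rw [← Category.assoc, hf2, hip', ← Category.assoc, h2, zero_comp]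
      exact ⟨sj' ≫ f, by rw [Category.assoc, hfp, ← Category.assoc, hsj']⟩
    choose s hsp using hs
    refine ⟨Sigma.desc s, ?_⟩
    apply Sigma.hom_ext
    intro j
    simp [← Category.assoc, hsp j]
  exact ⟨fun hj B0 B1 b hb => key b (fun j => hj j b hb), key⟩

end IdealApprox
end

section
/- Let (A;E) be an exact category with exact coproducts and let I be a small ideal generated by a set of morphisms m^i, i ∈ I0. Then for m = ⨿_i m^i, one has m⊥ = I⊥; consequently the left closure ⊥(I⊥) of I equals the left closure ⊥(m⊥) of the single morphism m. -/
open CategoryTheory CategoryTheory.Limits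

universe w v u

namespace IdealApprox

variable {A : Type u} [Category.{v} A] [Preadditive A]

/-!
The morphisms `a` with `Ext(a, b) = 0` form an ideal: sums and precomposites of lifts are
lifts, and for a postcomposite `a ≫ h` one pulls the conflation back along `h`, lifts `a`
there, and maps the lift forward. So `b ∈ I⊥` iff `Ext(m i, b) = 0` for every generator.
Since `m i` factors through `∐ m` (via the injection and the projection), and `∐ m` is the
copairing of the `m i ≫ ι i`, whose lifts glue along the coproduct, this happens iff
`Ext(∐ m, b) = 0`.
-/

lemma ExactStructureData.IsExact.conf_of_isLimit {E : ExactStructureData A} (hE : E.IsExact)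
    {B B' C X : A} {i : B ⟶ C} {p : C ⟶ X} (hc : E.conf i p) {i' : B' ⟶ C}
    (w : i' ≫ p = 0) (hi' : IsLimit (KernelFork.ofι i' w)) : E.conf i' p := by
  obtain ⟨hi⟩ := (hE.ker_coker hc).isKernel
  refine hE.iso_closed (IsLimit.conePointUniqueUpToIso hi hi') (Iso.refl C) (Iso.refl X)
    ?_ (by simp) hc
  simpa using (IsLimit.conePointUniqueUpToIso_hom_comp hi hi' WalkingParallelPair.zero).symm

def isLimitKernelForkOfIsPullback {B C Y W Z : A} {j : B ⟶ C} {p : C ⟶ Y} (wj : j ≫ p = 0)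
    (hj : IsLimit (KernelFork.ofι j wj)) {g : W ⟶ C} {q : W ⟶ Z} {h : Z ⟶ Y}
    (sq : IsPullback g q p h) {j' : B ⟶ W} (hg : j' ≫ g = j) (hq : j' ≫ q = 0) :
    IsLimit (KernelFork.ofι j' hq) :=
  let lift {T : A} (k : T ⟶ W) (hk : k ≫ q = 0) :=
    KernelFork.IsLimit.lift' hj (k ≫ g)
      (by rw [Category.assoc, sq.w, ← Category.assoc, hk, zero_comp])
  KernelFork.IsLimit.ofι _ _
    (fun k hk => (lift k hk).1)
    (fun k hk => sq.hom_ext (by rw [Category.assoc, hg]; exact (lift k hk).2)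
      (by rw [Category.assoc, hq, comp_zero, hk]))
    (fun k hk l hl => Fork.IsLimit.hom_ext hj (by
      rw [(lift k hk).2, Fork.ι_ofι, ← hl, Category.assoc, hg]))

lemma ExactStructureData.IsExact.exists_conf_pullback {E : ExactStructureData A}
    (hE : E.IsExact) {B C Y Z : A} {j : B ⟶ C} {p : C ⟶ Y} (hc : E.conf j p) (h : Z ⟶ Y) :
    ∃ (W : A) (g : W ⟶ C) (q : W ⟶ Z) (j' : B ⟶ W),
      IsPullback g q p h ∧ E.conf j' q ∧ j' ≫ g = j := by
  obtain ⟨W, g, q, sq, B', k, hk⟩ := hE.pullback_deflation p h ⟨B, j, hc⟩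
  have hjp := (hE.ker_coker hc).w
  obtain ⟨hj⟩ := (hE.ker_coker hc).isKernel
  let j' : B ⟶ W := sq.lift j 0 (by simp [hjp])
  have hq : j' ≫ q = 0 := sq.lift_snd _ _ _
  exact ⟨W, g, q, j', sq, hE.conf_of_isLimit hk hq
    (isLimitKernelForkOfIsPullback hjp hj sq (sq.lift_fst _ _ _) hq), sq.lift_fst _ _ _⟩

namespace ExtZero

variable {E : ExactStructureData A} {A0 A1 B0 B1 : A} {b : B0 ⟶ B1}

lemma zero : ExtZero E (0 : A0 ⟶ A1) b :=
  fun _ _ _ _ _ _ _ _ _ _ _ => ⟨0, zero_comp⟩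

lemma add {a a' : A0 ⟶ A1} (ha : ExtZero E a b) (ha' : ExtZero E a' b) :
    ExtZero E (a + a') b := by
  intro C i p hc C' c i' p' hpo hcp hi'p'
  obtain ⟨s, hs⟩ := ha i p hc c i' p' hpo hcp hi'p'
  obtain ⟨s', hs'⟩ := ha' i p hc c i' p' hpo hcp hi'p'
  exact ⟨s + s', by rw [Preadditive.add_comp, hs, hs']⟩

lemma sum {κ : Type*} (s : Finset κ) {f : κ → (A0 ⟶ A1)} (hf : ∀ k ∈ s, ExtZero E (f k) b) :
    ExtZero E (∑ k ∈ s, f k) b :=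
  Finset.sum_induction f (fun a => ExtZero E a b) (fun _ _ => add) zero hf

lemma precomp {X : A} {a : A0 ⟶ A1} (ha : ExtZero E a b) (g : X ⟶ A0) :
    ExtZero E (g ≫ a) b := by
  intro C i p hc C' c i' p' hpo hcp hi'p'
  obtain ⟨s, hs⟩ := ha i p hc c i' p' hpo hcp hi'p'
  exact ⟨g ≫ s, by rw [Category.assoc, hs]⟩

lemma postcomp (hE : E.IsExact) {Y : A} {a : A0 ⟶ A1} (ha : ExtZero E a b) (h : A1 ⟶ Y) :
    ExtZero E (a ≫ h) b := by
  intro C j p hc C' c i' p' hpo hcp hi'p'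
  obtain ⟨W, g, q, j₁, sq, hc₁, hj₁g⟩ := hE.exists_conf_pullback hc h
  have hj₁q : j₁ ≫ q = 0 := (hE.ker_coker hc₁).w
  obtain ⟨W', c₁, i₁, po, -⟩ := hE.pushout_inflation j₁ b ⟨A1, q, hc₁⟩
  let q₁ : W' ⟶ A1 := po.desc q 0 (by simp [hj₁q])
  obtain ⟨s, hs⟩ := ha j₁ q hc₁ c₁ i₁ q₁ po (po.inl_desc _ _ _) (po.inr_desc _ _ _)
  let u : W' ⟶ C' := po.desc (g ≫ c) i' (by rw [← Category.assoc, hj₁g, hpo.w])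
  have hu : u ≫ p' = q₁ ≫ h := po.hom_ext
    (by simp [u, q₁, hcp, sq.w]) (by simp [u, q₁, hi'p'])
  exact ⟨s ≫ u, by rw [Category.assoc, hu, ← Category.assoc, hs]⟩

lemma sigmaDesc {ι : Type*} {X : ι → A} [HasCoproduct X] {f : ∀ i, X i ⟶ A1}
    (hf : ∀ i, ExtZero E (f i) b) : ExtZero E (Sigma.desc f) b := by
  intro C j p hc C' c i' p' hpo hcp hi'p'
  choose s hs using fun i => hf i j p hc c i' p' hpo hcp hi'p'
  exact ⟨Sigma.desc s, Sigma.hom_ext _ _ fun i => by simp [hs]⟩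

end ExtZero

lemma extZero_sigmaMap_iff {E : ExactStructureData A} (hE : E.IsExact) {ι : Type*}
    {X0 X1 : ι → A} [HasCoproduct X0] [HasCoproduct X1] (m : ∀ i, X0 i ⟶ X1 i)
    {B0 B1 : A} {b : B0 ⟶ B1} :
    ExtZero E (Limits.Sigma.map m) b ↔ ∀ i, ExtZero E (m i) b := by
  classical
  constructor
  · intro hm i
    have hfac : m i = Sigma.ι X0 i ≫ Limits.Sigma.map m ≫ Sigma.desc (Pi.single i (𝟙 (X1 i))) := by
      simp
    rw [hfac]
    exact (hm.postcomp hE _).precomp _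
  · intro hm
    have hdesc : Limits.Sigma.map m = Sigma.desc fun i => m i ≫ Sigma.ι X1 i := by
      ext; simp
    rw [hdesc]
    exact ExtZero.sigmaDesc fun i => (hm i).postcomp hE _

lemma rightPerp_genIdeal_iff {E : ExactStructureData A} (hE : E.IsExact) {ι : Type w}
    {X0 X1 : ι → A} (m : ∀ i, X0 i ⟶ X1 i) {B0 B1 : A} {b : B0 ⟶ B1} :
    rightPerp E (genIdeal m) b ↔ ∀ i, ExtZero E (m i) b := by
  refine ⟨fun hb i => hb (m i) ⟨1, fun _ => i, fun _ => 𝟙 _, fun _ => 𝟙 _, by simp⟩, ?_⟩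
  rintro hm _ _ _ ⟨n, j, g, h, rfl⟩
  exact ExtZero.sum _ fun k _ => ((hm (j k)).postcomp hE (h k)).precomp (g k)

variable [HasCoproducts.{w} A]

theorem statement11_general (E : ExactStructureData A) (hE : E.IsExact)
    {ι : Type w} {X0 X1 : ι → A} (m : ∀ i, X0 i ⟶ X1 i) :
    (∀ ⦃B0 B1 : A⦄ (b : B0 ⟶ B1),
        rightPerp E (genIdeal m) b ↔ ExtZero E (Limits.Sigma.map m) b) ∧
    (∀ ⦃Y0 Y1 : A⦄ (f : Y0 ⟶ Y1),
        leftPerp E (rightPerp E (genIdeal m)) f ↔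
          leftPerp E (fun _ _ b => ExtZero E (Limits.Sigma.map m) b) f) := by
  have hperp : ∀ ⦃B0 B1 : A⦄ (b : B0 ⟶ B1),
      rightPerp E (genIdeal m) b ↔ ExtZero E (Limits.Sigma.map m) b :=
    fun _ _ _ => (rightPerp_genIdeal_iff hE m).trans (extZero_sigmaMap_iff hE m).symm
  exact ⟨hperp, fun _ _ _ => by simp only [leftPerp, hperp]⟩

/-- the left closure of a small ideal.  If `I` is the ideal generated
by a set of morphisms `m i`, and `m = ∐ m i`, then `m⊥ = I⊥`, and consequently the left
closure `⊥(I⊥)` of `I` coincides with the left closure `⊥(m⊥)` of the single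
morphism `m`. -/
theorem statement11 (E : ExactStructureData A) (hE : E.IsExact)
    (hco : HasExactCoproducts.{w} E)
    {ι : Type w} {X0 X1 : ι → A} (m : ∀ i, X0 i ⟶ X1 i) :
    (∀ ⦃B0 B1 : A⦄ (b : B0 ⟶ B1),
        rightPerp E (genIdeal m) b ↔ ExtZero E (Limits.Sigma.map m) b) ∧
    (∀ ⦃Y0 Y1 : A⦄ (f : Y0 ⟶ Y1),
        leftPerp E (rightPerp E (genIdeal m)) f ↔
          leftPerp E (fun _ _ b => ExtZero E (Limits.Sigma.map m) b) f) :=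
  statement11_general E hE m

end IdealApprox
end

section
/- Let (A;E) be an exact category with exact coproducts and let {J_i | i ∈ I} be a set-indexed family of special preenveloping ideals of (A;E). Then the intersection J = ⋂_{i ∈ I} J_i is a special preenveloping ideal; explicitly, if for each i the object B has a special J_i-preenvelope with inflation m^i: B → C_0^i, then the domain component of the pushout ⨿_B m^i in the arrow category is a special J-preenvelope of B, with cosyzygy the coproduct ⨿_i a^i of the individual cosyzygies. -/
open CategoryTheory CategoryTheory.Limits

universe w v u

namespace IdealApprox

variable {A : Type u} [Category.{v} A] [Preadditive A]

section AuxStatement12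

/-- Cokernels transport along pushout squares. -/
noncomputable def auxCokerOfPushout {X Y Z W Q : A} {i : X ⟶ Y} {f : X ⟶ Z} {c : Y ⟶ W}
    {i' : Z ⟶ W} (hpo : IsPushout i f c i') {p : Y ⟶ Q} (w : i ≫ p = 0)
    (hp : IsColimit (CokernelCofork.ofπ p w)) {q : W ⟶ Q}
    (hcq : c ≫ q = p) (hiq : i' ≫ q = 0) :
    IsColimit (CokernelCofork.ofπ q hiq) := by
  have hw : ∀ {T : A} (t : W ⟶ T), i' ≫ t = 0 → i ≫ (c ≫ t) = 0 := by
    intro T t ht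
    rw [← Category.assoc, hpo.w, Category.assoc, ht, Limits.comp_zero]
  refine CokernelCofork.IsColimit.ofπ q hiq
    (fun {T} t ht => (CokernelCofork.IsColimit.desc' hp (c ≫ t) (hw t ht)).1) ?_ ?_
  · intro T t ht
    apply hpo.hom_ext
    · rw [← Category.assoc, hcq]
      exact (CokernelCofork.IsColimit.desc' hp (c ≫ t) (hw t ht)).2
    · rw [← Category.assoc, hiq, Limits.zero_comp, ht]
  · intro T t ht m hm
    apply Cofork.IsColimit.hom_ext hp
    have h1 : p ≫ m = c ≫ t := by rw [← hcq, Category.assoc, hm]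
    have h2 := (CokernelCofork.IsColimit.desc' hp (c ≫ t) (hw t ht)).2
    simpa [h1] using h2.symm

/-- Kernels transport along pullback squares. -/
noncomputable def auxKerOfPullback {B C X Z W : A} {i : B ⟶ C} {p : C ⟶ X} {f : Z ⟶ X}
    {g : W ⟶ C} {q : W ⟶ Z} (hpb : IsPullback g q p f)
    (w : i ≫ p = 0) (hk : IsLimit (KernelFork.ofι i w))
    {j : B ⟶ W} (hjg : j ≫ g = i) (hjq : j ≫ q = 0) :
    IsLimit (KernelFork.ofι j hjq) := by
  have hw : ∀ {T : A} (t : T ⟶ W), t ≫ q = 0 → (t ≫ g) ≫ p = 0 := by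
    intro T t ht
    rw [Category.assoc, hpb.w, ← Category.assoc, ht, Limits.zero_comp]
  refine KernelFork.IsLimit.ofι j hjq
    (fun {T} t ht => (KernelFork.IsLimit.lift' hk (t ≫ g) (hw t ht)).1) ?_ ?_
  · intro T t ht
    apply hpb.hom_ext
    · rw [Category.assoc, hjg]
      exact (KernelFork.IsLimit.lift' hk (t ≫ g) (hw t ht)).2
    · rw [Category.assoc, hjq, Limits.comp_zero, ht]
  · intro T t ht m hm
    apply Fork.IsLimit.hom_ext hk
    have h1 : m ≫ i = t ≫ g := by rw [← hjg, ← Category.assoc, hm]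
    have h2 := (KernelFork.IsLimit.lift' hk (t ≫ g) (hw t ht)).2
    simpa [h1] using h2.symm

/-- The pushout of a conflation along an arbitrary morphism is a conflation, with
the induced map to the original quotient as deflation. -/
theorem aux_conf_of_pushout {E : ExactStructureData A} (hE : E.IsExact)
    {X Y Z W Q : A} {i : X ⟶ Y} {p : Y ⟶ Q} (hconf : E.conf i p)
    {f : X ⟶ Z} {c : Y ⟶ W} {i' : Z ⟶ W} (hpo : IsPushout i f c i')
    {q : W ⟶ Q} (hcq : c ≫ q = p) (hiq : i' ≫ q = 0) : E.conf i' q := by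
  obtain ⟨W₂, c₂, i₂, hpo₂, X', p₂, hconf₂⟩ := hE.pushout_inflation i f ⟨Q, p, hconf⟩
  let e : W₂ ≅ W :=
    { hom := hpo₂.desc c i' hpo.w
      inv := hpo.desc c₂ i₂ hpo₂.w
      hom_inv_id := hpo₂.hom_ext (by simp) (by simp)
      inv_hom_id := hpo.hom_ext (by simp) (by simp) }
  have h1 : E.conf i' (e.inv ≫ p₂) := by
    refine hE.iso_closed (Iso.refl Z) e (Iso.refl X') ?_ ?_ hconf₂
    · simp [e]
    · show p₂ ≫ (Iso.refl X').hom = e.hom ≫ (e.inv ≫ p₂)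
      rw [← Category.assoc, e.hom_inv_id]
      simp
  have kc := hE.ker_coker hconf
  have hq : IsColimit (CokernelCofork.ofπ q hiq) :=
    auxCokerOfPushout hpo kc.w kc.isCokernel.some hcq hiq
  have kc1 := hE.ker_coker h1
  have h2coker := kc1.isCokernel.some
  refine hE.iso_closed (Iso.refl Z) (Iso.refl W)
    (IsColimit.coconePointUniqueUpToIso h2coker hq) (by simp) ?_ h1
  have := IsColimit.comp_coconePointUniqueUpToIso_hom h2coker hq WalkingParallelPair.one
  simpa using this

/-- The pullback of a conflation along an arbitrary morphism is a conflation, with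
the induced map from the original kernel as inflation. -/
theorem aux_conf_of_pullback {E : ExactStructureData A} (hE : E.IsExact)
    {B C X Z W : A} {i : B ⟶ C} {p : C ⟶ X} (hconf : E.conf i p)
    {f : Z ⟶ X} {g : W ⟶ C} {q : W ⟶ Z} (hpb : IsPullback g q p f)
    {j : B ⟶ W} (hjg : j ≫ g = i) (hjq : j ≫ q = 0) : E.conf j q := by
  obtain ⟨W₂, g₂, q₂, hpb₂, K, k, hconf₂⟩ := hE.pullback_deflation p f ⟨B, i, hconf⟩
  let e : W ≅ W₂ :=
    { hom := hpb₂.lift g q hpb.w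
      inv := hpb.lift g₂ q₂ hpb₂.w
      hom_inv_id := hpb.hom_ext (by simp) (by simp)
      inv_hom_id := hpb₂.hom_ext (by simp) (by simp) }
  have h1 : E.conf (k ≫ e.inv) q := by
    refine hE.iso_closed (Iso.refl K) e.symm (Iso.refl Z) ?_ ?_ hconf₂
    · simp
    · simp [e]
  have kc := hE.ker_coker hconf
  have hj : IsLimit (KernelFork.ofι j hjq) :=
    auxKerOfPullback hpb kc.w kc.isKernel.some hjg hjq
  have kc1 := hE.ker_coker h1
  have h2ker := kc1.isKernel.some
  refine hE.iso_closed (IsLimit.conePointUniqueUpToIso h2ker hj) (Iso.refl W)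
    (Iso.refl Z) ?_ (by simp) h1
  have := IsLimit.conePointUniqueUpToIso_hom_comp h2ker hj WalkingParallelPair.zero
  simpa using this.symm

end AuxStatement12

variable [HasCoproducts.{w} A]

/-- Theorem: infinite intersections of special preenveloping ideals.
In an exact category with exact coproducts, the intersection of a set-indexed family of
special preenveloping ideals is special preenveloping; explicitly, the pushout of a
family of special `J i`-preenvelopes `m i : B ⟶ C i` (the domain component of the
pushout in the arrow category) is a special `⋂ J i`-preenvelope of `B`. -/
theorem statement12 (E : ExactStructureData A) (hE : E.IsExact)
    (hco : HasExactCoproducts.{w} E)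
    {ι : Type w} (J : ι → Ideal A)
    (hJ : ∀ i, SpecialPreenveloping E (J i).mem) :
    SpecialPreenveloping E (interFamily fun i => (J i).mem) ∧
    (∀ ⦃B : A⦄ ⦃C : ι → A⦄ (m : ∀ i, B ⟶ C i),
        (∀ i, IsSpecialPreenvelope E (J i).mem (m i)) →
        ∀ ⦃P : A⦄ (h : (∐ C) ⟶ P) (mP : B ⟶ P),
          IsPushout (Limits.Sigma.map m) (Limits.Sigma.desc fun _ => 𝟙 B) h mP →
          IsSpecialPreenvelope E (interFamily fun i => (J i).mem) mP) := by
  have key : (∀ ⦃B : A⦄ ⦃C : ι → A⦄ (m : ∀ i, B ⟶ C i),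
        (∀ i, IsSpecialPreenvelope E (J i).mem (m i)) →
        ∀ ⦃P : A⦄ (h : (∐ C) ⟶ P) (mP : B ⟶ P),
          IsPushout (Limits.Sigma.map m) (Limits.Sigma.desc fun _ => 𝟙 B) h mP →
          IsSpecialPreenvelope E (interFamily fun i => (J i).mem) mP) := by
    intro B C m hm P h mP hpo
    have hm1 : ∀ i, (J i).mem (m i) := fun i => (hm i).1
    choose A0 A1 C1 p0 jc p1 cc a hc0 hc1 hjc hpa hperp using fun i => (hm i).2
    constructor
    · -- membership in the intersection
      intro i
      have hfac : mP = 𝟙 B ≫ m i ≫ (Sigma.ι C i ≫ h) := by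
        calc mP = Sigma.ι (fun _ : ι => B) i ≫ (Sigma.desc fun _ => 𝟙 B) ≫ mP := by simp
          _ = Sigma.ι (fun _ : ι => B) i ≫ Limits.Sigma.map m ≫ h := by rw [← hpo.w]
          _ = 𝟙 B ≫ m i ≫ (Sigma.ι C i ≫ h) := by simp
      rw [hfac]
      exact (J i).comp_mem _ _ (hm1 i)
    · -- the conflation data
      have conf0 : E.conf (Limits.Sigma.map m) (Limits.Sigma.map p0) := hco ι _ C A0 m p0 hc0
      have conf1 : E.conf (Limits.Sigma.map jc) (Limits.Sigma.map p1) := hco ι _ C1 A1 jc p1 hc1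
      have w0 : Limits.Sigma.map m ≫ Limits.Sigma.map p0
          = (Sigma.desc fun _ => 𝟙 B) ≫ (0 : B ⟶ ∐ A0) := by
        ext i
        simp [reassoc_of% (hE.ker_coker (hc0 i)).w]
      have confP : E.conf mP (hpo.desc (Limits.Sigma.map p0) 0 w0) :=
        aux_conf_of_pushout hE conf0 hpo (hpo.inl_desc _ _ _) (hpo.inr_desc _ _ _)
      obtain ⟨Q, hQ, mQ, hpoQ, -⟩ := hE.pushout_inflation (Limits.Sigma.map jc)
        (Sigma.desc fun _ => 𝟙 B) ⟨_, Limits.Sigma.map p1, conf1⟩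
      have w1 : Limits.Sigma.map jc ≫ Limits.Sigma.map p1
          = (Sigma.desc fun _ => 𝟙 B) ≫ (0 : B ⟶ ∐ A1) := by
        ext i
        simp [reassoc_of% (hE.ker_coker (hc1 i)).w]
      have confQ : E.conf mQ (hpoQ.desc (Limits.Sigma.map p1) 0 w1) :=
        aux_conf_of_pushout hE conf1 hpoQ (hpoQ.inl_desc _ _ _) (hpoQ.inr_desc _ _ _)
      have wc : Limits.Sigma.map m ≫ Limits.Sigma.map cc ≫ hQ = (Sigma.desc fun _ => 𝟙 B) ≫ mQ := by
        have hmc : Limits.Sigma.map m ≫ Limits.Sigma.map cc = Limits.Sigma.map jc := by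
          ext i
          simp [reassoc_of% (hjc i)]
        rw [← Category.assoc, hmc, hpoQ.w]
      refine ⟨∐ A0, ∐ A1, Q, hpo.desc (Limits.Sigma.map p0) 0 w0, mQ,
        hpoQ.desc (Limits.Sigma.map p1) 0 w1, hpo.desc (Limits.Sigma.map cc ≫ hQ) mQ wc, Limits.Sigma.map a,
        confP, confQ, hpo.inr_desc _ _ _, ?_, ?_⟩
      · -- commutativity of the right-hand square
        apply hpo.hom_ext
        · rw [← Category.assoc, hpo.inl_desc, ← Category.assoc, hpo.inl_desc,
            Category.assoc, hpoQ.inl_desc]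
          ext i
          simp [reassoc_of% (hpa i)]
        · rw [← Category.assoc, hpo.inr_desc, Limits.zero_comp,
            ← Category.assoc, hpo.inr_desc, hpoQ.inr_desc]
      · -- the coproduct of the cosyzygies is left orthogonal to the intersection
        intro B0 B1 b hb C' iC p hconfC C'' c i' p'' hpo' hcp hip0
        have keylift : ∀ i, ∃ s : A0 i ⟶ C'', s ≫ p'' = a i ≫ Sigma.ι A1 i := by
          intro i
          obtain ⟨D, g, q, hpb, K, k, hconfk⟩ :=
            hE.pullback_deflation p (Sigma.ι A1 i) ⟨B0, iC, hconfC⟩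
          have wip : iC ≫ p = (0 : B0 ⟶ A1 i) ≫ Sigma.ι A1 i := by
            simp [(hE.ker_coker hconfC).w]
          have hjg : hpb.lift iC 0 wip ≫ g = iC := hpb.lift_fst _ _ _
          have hjq : hpb.lift iC 0 wip ≫ q = 0 := hpb.lift_snd _ _ _
          have confD : E.conf (hpb.lift iC 0 wip) q :=
            aux_conf_of_pullback hE hconfC hpb hjg hjq
          obtain ⟨D', cD, iD', hpoD, -⟩ :=
            hE.pushout_inflation (hpb.lift iC 0 wip) b ⟨_, q, confD⟩
          have wq : hpb.lift iC 0 wip ≫ q = b ≫ (0 : B1 ⟶ A1 i) := by simp [hjq]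
          obtain ⟨s, hs⟩ := hperp i b (hb i) (hpb.lift iC 0 wip) q confD cD iD'
            (hpoD.desc q 0 wq) hpoD (hpoD.inl_desc _ _ _) (hpoD.inr_desc _ _ _)
          have wt : hpb.lift iC 0 wip ≫ (g ≫ c) = b ≫ i' := by
            rw [← Category.assoc, hjg, hpo'.w]
          refine ⟨s ≫ hpoD.desc (g ≫ c) i' wt, ?_⟩
          have htp : hpoD.desc (g ≫ c) i' wt ≫ p''
              = hpoD.desc q 0 wq ≫ Sigma.ι A1 i := by
            apply hpoD.hom_ext
            · simp [hcp, hpb.w]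
            · simp [hip0]
          rw [Category.assoc, htp, ← Category.assoc, hs]
        choose si hsi using keylift
        refine ⟨Sigma.desc si, ?_⟩
        ext i
        simp [hsi i]
  refine ⟨?_, key⟩
  intro B
  choose C m hm using fun i => hJ i B
  have hinf : ∀ i, ∃ (X : A) (p : C i ⟶ X), E.conf (m i) p := by
    intro i
    obtain ⟨-, A0, A1, C1, p0, j', p1, cc, a, hc0, -⟩ := hm i
    exact ⟨A0, p0, hc0⟩
  choose X0 p0 hc0 using hinf
  obtain ⟨P, h, mP, hpo, -⟩ := hE.pushout_inflation (Limits.Sigma.map m)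
    (Sigma.desc fun _ => 𝟙 B) ⟨_, Limits.Sigma.map p0, hco ι _ C X0 m p0 hc0⟩
  exact ⟨P, mP, key m hm h mP hpo⟩

end IdealApprox
end
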